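/- As n → ∞, the (2n+1)-th root of V(SU(n+1))/V(SU(n)) is asymptotic to (2πe/n)^{1/2}; i.e., the limit of (V(SU(n+1))/V(SU(n)))^{1/(2n+1)} · (n/(2πe))^{1/2} equals 1. -/

import Mathlib

/-!
By Stirling, `n! = s n * √(2n) * (n/e)^n` with `s n → √π`. Hence
`V(SU(n+1)) / V(SU(n)) = √((n+1)/n) (2π)^(n+1) / n!` equals `c n * (2πe/n)^((2n+1)/2)` with
`c n → e^(-1/2) ≠ 0`. Its `(2n+1)`-th root is `c n ^ (1/(2n+1)) * (2πe/n)^(1/2)`, and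
`c n ^ (1/(2n+1)) → 1` because the exponent tends to `0` while the base has a positive limit.
-/

open Real Finset Filter

noncomputable def suVolume (n : ℕ) : ℝ :=
  √n * (2 * π) ^ (n * (n + 1) / 2 - 1) / ∏ i ∈ Icc 1 (n - 1), (i.factorial : ℝ)

lemma succ_mul_succ_add_one_div_two (n : ℕ) :
    (n + 1) * (n + 1 + 1) / 2 = n * (n + 1) / 2 + (n + 1) := by
  rw [show (n + 1) * (n + 1 + 1) = n * (n + 1) + (n + 1) * 2 by ring,
    Nat.add_mul_div_right _ _ two_pos]

lemma suVolume_succ_div {n : ℕ} (hn : 1 ≤ n) :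
    suVolume (n + 1) / suVolume n = √((n + 1) / n) * (2 * π) ^ (n + 1) / n.factorial := by
  have hexp : (n + 1) * (n + 1 + 1) / 2 - 1 = n * (n + 1) / 2 - 1 + (n + 1) := by
    have : 1 ≤ n * (n + 1) / 2 := (Nat.le_div_iff_mul_le two_pos).2 (by nlinarith)
    rw [succ_mul_succ_add_one_div_two]
    omega
  have hprod : ∏ i ∈ Icc 1 n, (i.factorial : ℝ)
      = (∏ i ∈ Icc 1 (n - 1), (i.factorial : ℝ)) * n.factorial := by
    obtain ⟨m, rfl⟩ := Nat.exists_eq_add_of_le' hn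
    rw [prod_Icc_succ_top (by omega), Nat.add_sub_cancel]
  have hn0 : (0 : ℝ) < n := by exact_mod_cast hn
  unfold suVolume
  rw [hexp, Nat.add_sub_cancel, pow_add, hprod, sqrt_div' _ hn0.le]
  push_cast
  field_simp

lemma two_pi_pow_succ_div_factorial_eq_stirlingSeq {n : ℕ} (hn : n ≠ 0) :
    (2 * π) ^ (n + 1) / n.factorial
      = √(π / exp 1) / Stirling.stirlingSeq n * (2 * π * exp 1 / n) ^ ((2 * n + 1) / 2 : ℝ) := by
  have hn0 : (0 : ℝ) < n := by positivity
  rw [show ((2 * n + 1) / 2 : ℝ) = n + 1 / 2 by ring, rpow_add (by positivity), rpow_natCast,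
    ← sqrt_eq_rpow, Stirling.stirlingSeq, div_pow, sqrt_div' _ (exp_pos 1).le, sqrt_div' _ hn0.le,
    sqrt_mul' _ (exp_pos 1).le, sqrt_mul' _ hn0.le, sqrt_mul zero_le_two, div_pow, mul_pow, mul_pow]
  field_simp
  rw [sq_sqrt zero_le_two, sq_sqrt pi_pos.le]
  ring

lemma mul_rpow_div_two_rpow_one_div_mul_inv_rpow {c b x : ℝ} (hc : 0 ≤ c) (hb : 0 < b)
    (hx : x ≠ 0) : (c * b ^ (x / 2)) ^ (1 / x) * b⁻¹ ^ (1 / 2 : ℝ) = c ^ (1 / x) := by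
  rw [mul_rpow hc (by positivity), ← rpow_mul hb.le, inv_rpow hb.le, div_mul_div_comm, mul_one,
    mul_comm 2 x, ← div_div, div_self hx, mul_assoc, mul_inv_cancel₀ (by positivity), mul_one]

lemma tendsto_one_div_two_mul_add_one :
    Tendsto (fun n : ℕ ↦ 1 / (2 * (n : ℝ) + 1)) atTop (nhds 0) := by
  simpa [add_comm] using tendsto_add_mul_div_add_mul_atTop_nhds (1 : ℝ) 1 0 two_ne_zero

lemma tendsto_sqrt_succ_div_self : Tendsto (fun n : ℕ ↦ √((n + 1) / n)) atTop (nhds 1) := by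
  simpa using ((tendsto_natCast_div_add_atTop (1 : ℝ)).inv₀ one_ne_zero).sqrt

/-- (V(SU(n+1))/V(SU(n)))^{1/(2n+1)} ~ (2πe/n)^{1/2} as n → ∞, i.e.
(V(SU(n+1))/V(SU(n)))^{1/(2n+1)} · (n/(2πe))^{1/2} → 1. -/
theorem volume_SU_ratio_asymptotic (V : ℕ → ℝ)
    (hV : ∀ n, 1 ≤ n → V n = Real.sqrt n * (2 * π) ^ (n * (n + 1) / 2 - 1)
        / ∏ i ∈ Icc 1 (n - 1), (Nat.factorial i : ℝ)) :
    Tendsto (fun n : ℕ =>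
        (V (n + 1) / V n) ^ ((1 : ℝ) / (2 * n + 1))
          * ((n : ℝ) / (2 * π * Real.exp 1)) ^ ((1 : ℝ) / 2))
      atTop (nhds 1) := by
  have hVs : ∀ n, 1 ≤ n → V n = suVolume n := hV
  set c : ℕ → ℝ := fun n ↦ √((n + 1) / n) * (√(π / exp 1) / Stirling.stirlingSeq n)
  have hc : Tendsto c atTop (nhds (1 * (√(π / exp 1) / √π))) :=
    tendsto_sqrt_succ_div_self.mul
      (tendsto_const_nhds.div Stirling.tendsto_stirlingSeq_sqrt_pi (by positivity))
  have hroot := hc.rpow tendsto_one_div_two_mul_add_one (Or.inl (by positivity))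
  rw [rpow_zero] at hroot
  refine hroot.congr' ?_
  filter_upwards [eventually_ge_atTop 1] with n hn
  have hc0 : 0 ≤ c n := by simp only [c, Stirling.stirlingSeq]; positivity
  rw [hVs n hn, hVs (n + 1) (by omega), suVolume_succ_div hn, mul_div_assoc,
    two_pi_pow_succ_div_factorial_eq_stirlingSeq (by omega), ← mul_assoc,
    ← inv_div (2 * π * exp 1) (n : ℝ)]
  exact (mul_rpow_div_two_rpow_one_div_mul_inv_rpow hc0 (by positivity) (by positivity)).symm
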